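/- arXiv:2310.05888 — 2 statements merged into one kernel-verified Lean document; each statement's English description precedes it below -/
import Mathlib

section
/- Let H be a real Hilbert space and let Q, L, ℒ₁, ℒ₂ be self-adjoint operators with ℒ₁ = Q + (1/(2A)) and ℒ₂ = L + M, where A > 0 and M is the operator of multiplication by 2A φ² for a fixed function φ. Suppose f₁ ⊥ φ² with ⟨Q f₁, f₁⟩ ≥ 0, f₂ ⊥ φ with ⟨L f₂, f₂⟩ ≥ 0, and suppose 2⟨φ f₁, f₂⟩ ≤ 2A⟨φ² f₂, f₂⟩ + (1/(2A))‖f₁‖². Then there is no ν ≠ 0 with ℒ₁ f₁ - φ f₂ = -ν² f₁ and -φ f₁ + ℒ₂ f₂ = -ν² f₂ unless f₁ = f₂ = 0. -/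
open RealInnerProductSpace

theorem no_negative_eigenvalue {H : Type*} [NormedAddCommGroup H]
    [InnerProductSpace ℝ H] [CompleteSpace H]
    (Q L Φ : H →L[ℝ] H) (hQ : IsSelfAdjoint Q) (hL : IsSelfAdjoint L)
    (hΦ : IsSelfAdjoint Φ)
    (A : ℝ) (hA : 0 < A)
    (L₁ L₂ : H →L[ℝ] H)
    (hL₁ : L₁ = Q + (1 / (2 * A)) • (1 : H →L[ℝ] H))
    (hL₂ : L₂ = L + (2 * A) • (Φ ∘L Φ))
    (φv : H) (f₁ f₂ : H)
    (horth₁ : ⟪f₁, Φ φv⟫ = 0) (horth₂ : ⟪f₂, φv⟫ = 0)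
    (hQnn : 0 ≤ ⟪Q f₁, f₁⟫) (hLnn : 0 ≤ ⟪L f₂, f₂⟫)
    (hCS : 2 * ⟪Φ f₁, f₂⟫ ≤ 2 * A * ⟪(Φ ∘L Φ) f₂, f₂⟫ + (1 / (2 * A)) * ‖f₁‖ ^ 2)
    (ν : ℝ) (hν : ν ≠ 0)
    (heq₁ : L₁ f₁ - Φ f₂ = (-(ν ^ 2)) • f₁)
    (heq₂ : -(Φ f₁) + L₂ f₂ = (-(ν ^ 2)) • f₂) :
    f₁ = 0 ∧ f₂ = 0 := by
  have hsym : ⟪Φ f₂, f₁⟫ = ⟪Φ f₁, f₂⟫ := by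
    have h := hΦ.isSymmetric f₂ f₁
    simpa [real_inner_comm] using h
  have e1 : ⟪Q f₁, f₁⟫ + (1 / (2 * A)) * ‖f₁‖ ^ 2 - ⟪Φ f₁, f₂⟫
      = -(ν ^ 2) * ‖f₁‖ ^ 2 := by
    have := congrArg (fun x => ⟪x, f₁⟫) heq₁
    simp only [hL₁, ContinuousLinearMap.add_apply, ContinuousLinearMap.smul_apply,
      ContinuousLinearMap.one_apply, inner_sub_left, inner_add_left,
      real_inner_smul_left, real_inner_self_eq_norm_sq] at this
    rw [← hsym]; linarith [this]
  have e2 : ⟪L f₂, f₂⟫ + 2 * A * ⟪(Φ ∘L Φ) f₂, f₂⟫ - ⟪Φ f₁, f₂⟫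
      = -(ν ^ 2) * ‖f₂‖ ^ 2 := by
    have := congrArg (fun x => ⟪x, f₂⟫) heq₂
    simp only [hL₂, ContinuousLinearMap.add_apply, ContinuousLinearMap.smul_apply,
      inner_add_left, inner_neg_left, real_inner_smul_left,
      real_inner_self_eq_norm_sq] at this
    linarith [this]
  have hν2 : 0 < ν ^ 2 := by positivity
  have h1 : ‖f₁‖ ^ 2 = 0 ∧ ‖f₂‖ ^ 2 = 0 := by
    constructor <;> nlinarith [sq_nonneg ‖f₁‖, sq_nonneg ‖f₂‖]
  constructor
  · exact norm_eq_zero.mp (by nlinarith [h1.1, norm_nonneg f₁])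
  · exact norm_eq_zero.mp (by nlinarith [h1.2, norm_nonneg f₂])
end

section
/- Let c > 1, σ > 0, 0 < α < (c-1)/(4σ), β = 3α, κ ∈ (0,1), A = 1/(2(c-1-4ασ)), γ² = σ/(2-κ²), φ₀² = 2γ²/A. Let d satisfy d'' = (2-κ²)d - 2d³ and d'² = (1-d²)(d² - (1-κ²)) (the dn ODEs), and set φ(x) = φ₀ d(γx), ψ = Aφ². Then the pair (φ, ψ) satisfies (1-c)ψ + βψ² + αψ'' + φ²/2 = b with b = -4α(1-κ²)γ⁴, and in particular b < 0. -/
/-!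
Writing `u = d (γ x)`, the profile is `ψ = A φ₀² u² = 2 γ² u²`, and the two dn identities make
`(d²)''` a polynomial in `d²`: `(d²)'' = 2 (d'² + d d'') = -6 d⁴ + 4 (2 - κ²) d² - 2 (1 - κ²)`.
The left-hand side of the equation is therefore a quadratic polynomial in `u²`. Its `u⁴`
coefficient cancels because `β = 3α`, its `u²` coefficient cancels by the choice of `A` and `φ₀`,
and the constant term `-4 α (1 - κ²) γ⁴` is `b`.
-/

lemma deriv_deriv_const_mul_comp_mul (f : ℝ → ℝ) (a γ x : ℝ) :
    deriv (deriv fun x => a * f (γ * x)) x = a * γ ^ 2 * deriv (deriv f) (γ * x) := by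
  have hderiv : (deriv fun x => a * f (γ * x)) = fun x => a * γ * deriv f (γ * x) := by
    funext y
    rw [deriv_const_mul_field, deriv_comp_mul_left, smul_eq_mul, mul_assoc]
  rw [hderiv, deriv_const_mul_field, deriv_comp_mul_left, smul_eq_mul]
  ring

lemma deriv_deriv_sq {d : ℝ → ℝ} (hd : ContDiff ℝ 2 d) (y : ℝ) :
    deriv (deriv fun y => d y ^ 2) y = 2 * (deriv d y ^ 2 + d y * deriv (deriv d) y) := by
  have hd₁ : Differentiable ℝ d := hd.differentiable two_ne_zero
  have hd₂ : Differentiable ℝ (deriv d) :=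
    ((contDiff_succ_iff_deriv (n := 1)).mp hd).2.2.differentiable one_ne_zero
  have hderiv : (deriv fun y => d y ^ 2) = fun y => 2 * (d y * deriv d y) := by
    funext z
    rw [deriv_fun_pow (hd₁ z)]
    ring
  rw [hderiv, deriv_const_mul_field, deriv_fun_mul (hd₁ y) (hd₂ y)]
  ring

lemma deriv_deriv_sq_of_dn_ode {d : ℝ → ℝ} {κ : ℝ} (hd : ContDiff ℝ 2 d)
    (hode : ∀ y, deriv (deriv d) y = (2 - κ ^ 2) * d y - 2 * (d y) ^ 3)
    (hode1 : ∀ y, (deriv d y) ^ 2 = (1 - (d y) ^ 2) * ((d y) ^ 2 - (1 - κ ^ 2))) (y : ℝ) :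
    deriv (deriv fun y => d y ^ 2) y
      = -6 * d y ^ 4 + 4 * (2 - κ ^ 2) * d y ^ 2 - 2 * (1 - κ ^ 2) := by
  rw [deriv_deriv_sq hd, hode, hode1]
  ring

theorem dnoidal_solves_second_equation_general (c σ α β κ A γ φ₀ b : ℝ)
    (hσ : 0 < σ) (hα0 : 0 < α) (hα : α < (c - 1) / (4 * σ))
    (hβ : β = 3 * α) (hκ0 : 0 < κ) (hκ1 : κ < 1)
    (hA : A = 1 / (2 * (c - 1 - 4 * α * σ)))
    (hγ : γ ^ 2 = σ / (2 - κ ^ 2)) (hφ₀ : φ₀ ^ 2 = 2 * γ ^ 2 / A)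
    (hb : b = -4 * α * (1 - κ ^ 2) * γ ^ 4)
    (d : ℝ → ℝ) (hd : ContDiff ℝ 2 d)
    (hode : ∀ y, deriv (deriv d) y = (2 - κ ^ 2) * d y - 2 * (d y) ^ 3)
    (hode1 : ∀ y, (deriv d y) ^ 2 = (1 - (d y) ^ 2) * ((d y) ^ 2 - (1 - κ ^ 2))) :
    (∀ x, (1 - c) * (A * (φ₀ * d (γ * x)) ^ 2)
        + β * (A * (φ₀ * d (γ * x)) ^ 2) ^ 2
        + α * deriv (deriv (fun x => A * (φ₀ * d (γ * x)) ^ 2)) x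
        + (φ₀ * d (γ * x)) ^ 2 / 2 = b) ∧ b < 0 := by
  have hκ : 0 < 1 - κ ^ 2 := by nlinarith
  have hden : 0 < c - 1 - 4 * α * σ := by
    have := (lt_div_iff₀ (by positivity : (0 : ℝ) < 4 * σ)).mp hα
    linarith
  have hγ₂ : 0 < γ ^ 2 := hγ ▸ div_pos hσ (by linarith)
  have hσγ : σ = γ ^ 2 * (2 - κ ^ 2) := by
    rw [hγ]; field_simp [show (2 : ℝ) - κ ^ 2 ≠ 0 by linarith]
  have hAφ₀ : A * φ₀ ^ 2 = 2 * γ ^ 2 := by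
    rw [hφ₀, hA]; field_simp
  have hφ₀' : φ₀ ^ 2 = 4 * γ ^ 2 * (c - 1 - 4 * α * σ) := by
    rw [hφ₀, hA]; field_simp; ring
  have hψ : (fun x => A * (φ₀ * d (γ * x)) ^ 2)
      = fun x => A * φ₀ ^ 2 * (fun y => d y ^ 2) (γ * x) := by
    funext x; ring
  refine ⟨fun x => ?_, ?_⟩
  · set u := d (γ * x)
    rw [hψ, deriv_deriv_const_mul_comp_mul (fun y => d y ^ 2),
      deriv_deriv_sq_of_dn_ode hd hode hode1, hβ, hb]
    linear_combination (3 * α * u ^ 4 * (A * φ₀ ^ 2 + 2 * γ ^ 2) + (1 - c) * u ^ 2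
        + α * γ ^ 2 * (-6 * u ^ 4 + 4 * (2 - κ ^ 2) * u ^ 2 - 2 * (1 - κ ^ 2))) * hAφ₀
      + u ^ 2 / 2 * hφ₀' - 8 * α * γ ^ 2 * u ^ 2 * hσγ
  · rw [hb]
    have := mul_pos (mul_pos hα0 hκ) (pow_pos hγ₂ 2)
    nlinarith

theorem dnoidal_solves_second_equation (c σ α β κ A γ φ₀ b : ℝ)
    (hc : 1 < c) (hσ : 0 < σ) (hα0 : 0 < α) (hα : α < (c - 1) / (4 * σ))
    (hβ : β = 3 * α) (hκ0 : 0 < κ) (hκ1 : κ < 1)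
    (hA : A = 1 / (2 * (c - 1 - 4 * α * σ)))
    (hγ : γ ^ 2 = σ / (2 - κ ^ 2)) (hφ₀ : φ₀ ^ 2 = 2 * γ ^ 2 / A)
    (hb : b = -4 * α * (1 - κ ^ 2) * γ ^ 4)
    (d : ℝ → ℝ) (hd : ContDiff ℝ 2 d)
    (hode : ∀ y, deriv (deriv d) y = (2 - κ ^ 2) * d y - 2 * (d y) ^ 3)
    (hode1 : ∀ y, (deriv d y) ^ 2 = (1 - (d y) ^ 2) * ((d y) ^ 2 - (1 - κ ^ 2))) :
    (∀ x, (1 - c) * (A * (φ₀ * d (γ * x)) ^ 2)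
        + β * (A * (φ₀ * d (γ * x)) ^ 2) ^ 2
        + α * deriv (deriv (fun x => A * (φ₀ * d (γ * x)) ^ 2)) x
        + (φ₀ * d (γ * x)) ^ 2 / 2 = b) ∧ b < 0 :=
  dnoidal_solves_second_equation_general c σ α β κ A γ φ₀ b hσ hα0 hα hβ hκ0 hκ1 hA hγ hφ₀ hb d hd
    hode hode1
end
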